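/- Let X ∈ ℝ^{m×p}, W ∈ ℝ^{m×q}, L*, S*, L̂, Ŝ ∈ ℝ^{p×q}, and Y = X(L* + S*) + W. Write Δ_L = L̂ − L* and Δ_S = Ŝ − S*. Assume: (i) ‖Y − X(L̂ + Ŝ)‖_F² ≤ ‖Y − X(L* + S*)‖_F²; (ii) rank(Δ_L) ≤ 2r; (iii) ‖Δ_S‖_0 ≤ 2s; (iv) the smallest eigenvalue of XᵀX is at least κ > 0; (v) the separation inequality ‖Δ_L + Δ_S‖_F² ≥ ½(‖Δ_L‖_F² + ‖Δ_S‖_F²) holds. Then ‖Δ_L‖_F² + ‖Δ_S‖_F² ≤ (32/κ²)·( r·‖XᵀW‖_op² + s·‖XᵀW‖_max² ). -/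

import Mathlib

open Matrix BigOperators

/-- Frobenius norm of a real matrix. -/
noncomputable def frobNorm {p q : ℕ} (M : Matrix (Fin p) (Fin q) ℝ) : ℝ :=
  Real.sqrt (∑ i, ∑ j, (M i j) ^ 2)

/-- ℓ2 operator norm (largest singular value) of a real matrix. -/
noncomputable def opNorm {p q : ℕ} (M : Matrix (Fin p) (Fin q) ℝ) : ℝ :=
  ‖LinearMap.toContinuousLinearMap (Matrix.toEuclideanLin M)‖

/-- Maximum absolute entry of a real matrix. -/
noncomputable def maxNorm {p q : ℕ} (M : Matrix (Fin p) (Fin q) ℝ) : ℝ :=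
  ⨆ i, ⨆ j, |M i j|

/-- Number of nonzero entries of a matrix (the "ℓ0 norm"). -/
noncomputable def sparsity {p q : ℕ} (M : Matrix (Fin p) (Fin q) ℝ) : ℕ :=
  {ij : Fin p × Fin q | M ij.1 ij.2 ≠ 0}.ncard

/-- Euclidean norm of a vector. -/
noncomputable def e2norm {n : ℕ} (v : Fin n → ℝ) : ℝ :=
  Real.sqrt (∑ i, (v i) ^ 2)

/-- Supremum norm of a vector. -/
noncomputable def supNorm {n : ℕ} (v : Fin n → ℝ) : ℝ :=
  ⨆ i, |v i|

/-- The statement that every eigenvalue of the symmetric matrix `A` is at least `κ`,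
expressed through the quadratic form: `vᵀ A v ≥ κ ‖v‖₂²` for every `v`. -/
def minEigBound {n : ℕ} (A : Matrix (Fin n) (Fin n) ℝ) (κ : ℝ) : Prop :=
  ∀ v : Fin n → ℝ, κ * (v ⬝ᵥ v) ≤ v ⬝ᵥ (A *ᵥ v)

/-!
Write `D = Δ_L + Δ_S` and `G = XᵀW`. Optimality of `(L̂, Ŝ)` gives the basic inequality
`‖XD‖_F² ≤ 2⟨D, G⟩`, and the eigenvalue bound gives `κ‖D‖_F² ≤ ‖XD‖_F²`. The pairing splits over
`D`: a matrix of rank at most `k` pairs with `G` to at most `√k ‖·‖_F ‖G‖_op` (expand its columns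
in an orthonormal basis of its column space), and one with at most `k` nonzero entries to at most
`√k ‖·‖_F ‖G‖_max`. With the separation inequality this gives
`κ(u² + v²) ≤ 4(√(2r)‖G‖_op u + √(2s)‖G‖_max v)` for `u = ‖Δ_L‖_F`, `v = ‖Δ_S‖_F`, and
Cauchy–Schwarz in `ℝ²` turns it into the bound.
-/

open Finset
open scoped RealInnerProductSpace Matrix.Norms.L2Operator

theorem sq_add_sq_le_of_mul_le {κ u v x y : ℝ} (hκ : 0 < κ)
    (h : κ * (u ^ 2 + v ^ 2) ≤ 4 * (x * u + y * v)) :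
    u ^ 2 + v ^ 2 ≤ 16 / κ ^ 2 * (x ^ 2 + y ^ 2) := by
  rw [div_mul_eq_mul_div, le_div_iff₀ (by positivity)]
  rcases (add_nonneg (sq_nonneg u) (sq_nonneg v)).eq_or_lt with h0 | h0
  · rw [← h0, zero_mul]; positivity
  · have hcs : (x * u + y * v) ^ 2 ≤ (x ^ 2 + y ^ 2) * (u ^ 2 + v ^ 2) := by
      nlinarith [sq_nonneg (x * v - y * u)]
    have : (κ * (u ^ 2 + v ^ 2)) ^ 2 ≤ (4 * (x * u + y * v)) ^ 2 :=
      pow_le_pow_left₀ (by positivity) h 2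
    nlinarith

theorem sum_mul_le_sqrt_card_support_mul {ι : Type*} [Fintype ι] (f g : ι → ℝ)
    {C : ℝ} (hC : 0 ≤ C) (hg : ∀ i, |g i| ≤ C) :
    ∑ i, f i * g i ≤ √(#{i | f i ≠ 0} : ℕ) * √(∑ i, f i ^ 2) * C := by
  set T : Finset ι := {i | f i ≠ 0}
  have hfg : ∀ i, f i * g i ≤ |f i| * C := fun i =>
    (le_abs_self _).trans ((abs_mul _ _).trans_le (mul_le_mul_of_nonneg_left (hg i) (abs_nonneg _)))
  calc ∑ i, f i * g i = ∑ i ∈ T, f i * g i :=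
        (sum_filter_of_ne fun i _ h => left_ne_zero_of_mul h).symm
    _ ≤ (∑ i ∈ T, 1 * |f i|) * C := by
        simp only [one_mul, sum_mul]
        exact sum_le_sum fun i _ => hfg i
    _ ≤ √(∑ i ∈ T, 1 ^ 2) * √(∑ i ∈ T, |f i| ^ 2) * C := by
        gcongr
        exact Real.sum_mul_le_sqrt_mul_sqrt _ _ _
    _ ≤ √(#T : ℕ) * √(∑ i, f i ^ 2) * C := by
        simp only [one_pow, sum_const, nsmul_one, sq_abs]
        gcongr
        exact subset_univ T

section InnerProductSpace

variable {E : Type*} [NormedAddCommGroup E] [InnerProductSpace ℝ E]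

theorem OrthonormalBasis.inner_eq_sum_inner_mul_inner_of_mem {U : Submodule ℝ E} {ι : Type*}
    [Fintype ι] (b : OrthonormalBasis ι ℝ U) {x : E} (hx : x ∈ U) (y : E) :
    ⟪x, y⟫ = ∑ l, ⟪x, (b l : E)⟫ * ⟪(b l : E), y⟫ := by
  have h := congrArg (fun z : U => ⟪(z : E), y⟫) (b.sum_repr' ⟨x, hx⟩)
  simp only [Submodule.coe_sum, Submodule.coe_smul, sum_inner, real_inner_smul_left,
    Submodule.coe_inner] at h
  rw [← h]
  exact sum_congr rfl fun l _ => by rw [real_inner_comm]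

theorem sum_inner_le_sqrt_finrank_mul {ι : Type*} [Fintype ι] (U : Submodule ℝ E)
    [FiniteDimensional ℝ U] {a m : ι → E} (ha : ∀ j, a j ∈ U) {C : ℝ} (hC0 : 0 ≤ C)
    (hC : ∀ u : E, ‖u‖ = 1 → ∑ j, ⟪u, m j⟫ ^ 2 ≤ C ^ 2) :
    ∑ j, ⟪a j, m j⟫ ≤ √(Module.finrank ℝ U) * C * √(∑ j, ‖a j‖ ^ 2) := by
  set n := Module.finrank ℝ U
  set b := stdOrthonormalBasis ℝ U
  have hcoef : ∑ j, ∑ l, ⟪a j, (b l : E)⟫ ^ 2 = ∑ j, ‖a j‖ ^ 2 :=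
    sum_congr rfl fun j _ => by
      simpa only [Submodule.coe_inner, Submodule.coe_norm] using b.sum_sq_inner_left ⟨a j, ha j⟩
  have hdual : ∑ j, ∑ l, ⟪(b l : E), m j⟫ ^ 2 ≤ n * C ^ 2 := by
    rw [sum_comm]
    calc ∑ l, ∑ j, ⟪(b l : E), m j⟫ ^ 2 ≤ ∑ _l : Fin n, C ^ 2 :=
          sum_le_sum fun l _ => hC _ (b.orthonormal.1 l)
      _ = n * C ^ 2 := by simp
  calc ∑ j, ⟪a j, m j⟫ = ∑ jl : ι × Fin n, ⟪a jl.1, (b jl.2 : E)⟫ * ⟪(b jl.2 : E), m jl.1⟫ := by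
        rw [Fintype.sum_prod_type' (fun j l => ⟪a j, (b l : E)⟫ * ⟪(b l : E), m j⟫)]
        exact sum_congr rfl fun j _ => b.inner_eq_sum_inner_mul_inner_of_mem (ha j) _
    _ ≤ √(∑ jl : ι × Fin n, ⟪a jl.1, (b jl.2 : E)⟫ ^ 2) *
          √(∑ jl : ι × Fin n, ⟪(b jl.2 : E), m jl.1⟫ ^ 2) :=
        Real.sum_mul_le_sqrt_mul_sqrt _ _ _
    _ ≤ √(∑ j, ‖a j‖ ^ 2) * √(n * C ^ 2) := by
        rw [Fintype.sum_prod_type' (fun j l => ⟪a j, (b l : E)⟫ ^ 2), hcoef,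
          Fintype.sum_prod_type' (fun j l => ⟪(b l : E), m j⟫ ^ 2)]
        gcongr
    _ = √n * C * √(∑ j, ‖a j‖ ^ 2) := by
        rw [Real.sqrt_mul (Nat.cast_nonneg _), Real.sqrt_sq hC0]
        ring

end InnerProductSpace

section MatrixNorms

variable {m p q : ℕ}

def frobInner (A B : Matrix (Fin p) (Fin q) ℝ) : ℝ := ∑ i, ∑ j, A i j * B i j

theorem frobInner_comm (A B : Matrix (Fin p) (Fin q) ℝ) : frobInner A B = frobInner B A := by
  simp only [frobInner, mul_comm]

theorem frobInner_add_left (A B M : Matrix (Fin p) (Fin q) ℝ) :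
    frobInner (A + B) M = frobInner A M + frobInner B M := by
  simp only [frobInner, Matrix.add_apply, add_mul, sum_add_distrib]

theorem frobInner_eq_trace (A B : Matrix (Fin p) (Fin q) ℝ) :
    frobInner A B = trace (Aᵀ * B) := by
  simp only [frobInner, trace, diag_apply, mul_apply, transpose_apply]
  exact sum_comm

theorem frobInner_mul_left (X : Matrix (Fin m) (Fin p) ℝ) (D : Matrix (Fin p) (Fin q) ℝ)
    (W : Matrix (Fin m) (Fin q) ℝ) : frobInner (X * D) W = frobInner D (Xᵀ * W) := by
  rw [frobInner_eq_trace, frobInner_eq_trace, transpose_mul, Matrix.mul_assoc]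

theorem frobNorm_nonneg (A : Matrix (Fin p) (Fin q) ℝ) : 0 ≤ frobNorm A :=
  Real.sqrt_nonneg _

theorem frobNorm_sq (A : Matrix (Fin p) (Fin q) ℝ) : frobNorm A ^ 2 = ∑ i, ∑ j, A i j ^ 2 :=
  Real.sq_sqrt (by positivity)

theorem frobNorm_sub_sq (A B : Matrix (Fin p) (Fin q) ℝ) :
    frobNorm (A - B) ^ 2 = frobNorm A ^ 2 - 2 * frobInner A B + frobNorm B ^ 2 := by
  simp only [frobNorm_sq, frobInner, Matrix.sub_apply, sub_sq, sum_add_distrib, sum_sub_distrib,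
    mul_assoc, ← mul_sum]

theorem opNorm_nonneg (M : Matrix (Fin p) (Fin q) ℝ) : 0 ≤ opNorm M :=
  norm_nonneg _

theorem opNorm_transpose (M : Matrix (Fin p) (Fin q) ℝ) : opNorm Mᵀ = opNorm M := by
  change ‖Mᵀ‖ = ‖M‖
  rw [← conjTranspose_eq_transpose_of_trivial]
  exact l2_opNorm_conjTranspose M

theorem sum_sq_inner_col_le (M : Matrix (Fin p) (Fin q) ℝ) (u : EuclideanSpace ℝ (Fin p)) :
    ∑ j, ⟪u, WithLp.toLp 2 (M.col j)⟫ ^ 2 ≤ (opNorm M * ‖u‖) ^ 2 := by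
  rw [← opNorm_transpose]
  calc ∑ j, ⟪u, WithLp.toLp 2 (M.col j)⟫ ^ 2
      = ‖(EuclideanSpace.equiv (Fin q) ℝ).symm (Mᵀ *ᵥ u.ofLp)‖ ^ 2 := by
        simp [EuclideanSpace.norm_sq_eq, PiLp.inner_apply, mulVec, dotProduct]
    _ ≤ (opNorm Mᵀ * ‖u‖) ^ 2 := by
        gcongr
        exact l2_opNorm_mulVec Mᵀ u

theorem maxNorm_nonneg (M : Matrix (Fin p) (Fin q) ℝ) : 0 ≤ maxNorm M :=
  Real.iSup_nonneg fun _ => Real.iSup_nonneg fun _ => abs_nonneg _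

theorem abs_le_maxNorm (M : Matrix (Fin p) (Fin q) ℝ) (i : Fin p) (j : Fin q) :
    |M i j| ≤ maxNorm M :=
  (le_ciSup (Set.finite_range _).bddAbove j).trans
    (le_ciSup (f := fun i => ⨆ j, |M i j|) (Set.finite_range _).bddAbove i)

theorem frobInner_le_of_rank_le (A M : Matrix (Fin p) (Fin q) ℝ) {k : ℕ} (hk : A.rank ≤ k) :
    frobInner A M ≤ √k * frobNorm A * opNorm M := by
  set U := LinearMap.range (toEuclideanLin A)
  have hU : Module.finrank ℝ U = A.rank :=
    (rank_eq_finrank_range_toLin A (EuclideanSpace.basisFun _ ℝ).toBasis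
      (EuclideanSpace.basisFun _ ℝ).toBasis).symm
  have hcol : ∀ j, WithLp.toLp 2 (A.col j) ∈ U := fun j =>
    ⟨WithLp.toLp 2 (Pi.single j 1), congrArg (WithLp.toLp 2) (mulVec_single_one A j)⟩
  have hM : ∀ u : EuclideanSpace ℝ (Fin p), ‖u‖ = 1 →
      ∑ j, ⟪u, WithLp.toLp 2 (M.col j)⟫ ^ 2 ≤ opNorm M ^ 2 := fun u hu => by
    simpa [hu] using sum_sq_inner_col_le M u
  have hinner : ∑ j, ⟪WithLp.toLp 2 (A.col j), WithLp.toLp 2 (M.col j)⟫ = frobInner A M := by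
    simp only [PiLp.inner_apply, col_apply, RCLike.inner_apply, Real.ringHom_apply, frobInner,
      mul_comm (A _ _)]
    exact sum_comm
  have hnorm : ∑ j, ‖WithLp.toLp 2 (A.col j)‖ ^ 2 = frobNorm A ^ 2 := by
    simp only [EuclideanSpace.norm_sq_eq, col_apply, Real.norm_eq_abs, sq_abs, frobNorm_sq]
    exact sum_comm
  have h := sum_inner_le_sqrt_finrank_mul U hcol (opNorm_nonneg M) hM
  rw [hinner, hnorm, hU, Real.sqrt_sq (frobNorm_nonneg A), mul_right_comm] at h
  exact h.trans (mul_le_mul_of_nonneg_right (mul_le_mul_of_nonneg_right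
    (Real.sqrt_le_sqrt (by exact_mod_cast hk)) (frobNorm_nonneg A)) (opNorm_nonneg M))

theorem frobInner_le_of_sparsity_le (S M : Matrix (Fin p) (Fin q) ℝ) {k : ℕ}
    (hk : sparsity S ≤ k) : frobInner S M ≤ √k * frobNorm S * maxNorm M := by
  have h := sum_mul_le_sqrt_card_support_mul (fun ij : Fin p × Fin q => S ij.1 ij.2)
    (fun ij => M ij.1 ij.2) (maxNorm_nonneg M) fun ij => abs_le_maxNorm M ij.1 ij.2
  have hcard : sparsity S = #{ij : Fin p × Fin q | S ij.1 ij.2 ≠ 0} := by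
    rw [sparsity, ← Set.ncard_coe_finset]
    simp
  rw [Fintype.sum_prod_type' (fun i j => S i j * M i j),
    Fintype.sum_prod_type' (fun i j => S i j ^ 2), ← hcard, ← frobNorm_sq,
    Real.sqrt_sq (frobNorm_nonneg S)] at h
  exact h.trans (mul_le_mul_of_nonneg_right (mul_le_mul_of_nonneg_right
    (Real.sqrt_le_sqrt (by exact_mod_cast hk)) (frobNorm_nonneg S)) (maxNorm_nonneg M))

theorem minEigBound.mul_frobNorm_sq_le {X : Matrix (Fin m) (Fin p) ℝ} {κ : ℝ}
    (h : minEigBound (Xᵀ * X) κ) (D : Matrix (Fin p) (Fin q) ℝ) :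
    κ * frobNorm D ^ 2 ≤ frobNorm (X * D) ^ 2 := by
  have hcol : ∀ j, κ * ∑ k, D k j ^ 2 ≤ ∑ i, (X * D) i j ^ 2 := fun j => by
    have := h (D.col j)
    rw [← mulVec_mulVec, dotProduct_mulVec, vecMul_transpose] at this
    simpa only [dotProduct, mul_apply, mulVec, col_apply, sq] using this
  rw [frobNorm_sq, frobNorm_sq, sum_comm, mul_sum, sum_comm (f := fun i j => (X * D) i j ^ 2)]
  exact sum_le_sum fun j _ => hcol j

end MatrixNorms

/-- Deterministic core of the transition estimation error bound for the
low-rank plus sparse estimator: under the optimality condition, rank and sparsity bounds on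
the errors, a minimum-eigenvalue condition on `XᵀX`, and the separation inequality,
`‖Δ_L‖_F² + ‖Δ_S‖_F² ≤ (32/κ²)(r‖XᵀW‖_op² + s‖XᵀW‖_max²)`. -/
theorem estimation_error_bound {m p q : ℕ}
    (X : Matrix (Fin m) (Fin p) ℝ) (W : Matrix (Fin m) (Fin q) ℝ)
    (Lstar Sstar Lhat Shat : Matrix (Fin p) (Fin q) ℝ)
    (Y : Matrix (Fin m) (Fin q) ℝ)
    (hY : Y = X * (Lstar + Sstar) + W)
    (r s : ℕ) (κ : ℝ) (hκ : 0 < κ)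
    (hopt : frobNorm (Y - X * (Lhat + Shat)) ^ 2 ≤
      frobNorm (Y - X * (Lstar + Sstar)) ^ 2)
    (hrank : (Lhat - Lstar).rank ≤ 2 * r)
    (hsparse : sparsity (Shat - Sstar) ≤ 2 * s)
    (hmin : minEigBound (Xᵀ * X) κ)
    (hsep : (frobNorm (Lhat - Lstar) ^ 2 + frobNorm (Shat - Sstar) ^ 2) / 2 ≤
      frobNorm ((Lhat - Lstar) + (Shat - Sstar)) ^ 2) :
    frobNorm (Lhat - Lstar) ^ 2 + frobNorm (Shat - Sstar) ^ 2 ≤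
      32 / κ ^ 2 * (r * opNorm (Xᵀ * W) ^ 2 + s * maxNorm (Xᵀ * W) ^ 2) := by
  set ΔL := Lhat - Lstar
  set ΔS := Shat - Sstar
  set G := Xᵀ * W
  have hnoise : Y - X * (Lstar + Sstar) = W := by rw [hY]; abel
  have hfit : Y - X * (Lhat + Shat) = W - X * (ΔL + ΔS) := by
    rw [hY]
    simp only [ΔL, ΔS, Matrix.mul_add, Matrix.mul_sub]
    abel
  have hbasic : frobNorm (X * (ΔL + ΔS)) ^ 2 ≤ 2 * (frobInner ΔL G + frobInner ΔS G) := by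
    rw [hfit, hnoise, frobNorm_sub_sq, frobInner_comm, frobInner_mul_left,
      frobInner_add_left] at hopt
    linarith
  have hL := frobInner_le_of_rank_le ΔL G hrank
  have hS := frobInner_le_of_sparsity_le ΔS G hsparse
  have hXD := hmin.mul_frobNorm_sq_le (ΔL + ΔS)
  have key : κ * (frobNorm ΔL ^ 2 + frobNorm ΔS ^ 2) ≤
      4 * (√(2 * r : ℕ) * opNorm G * frobNorm ΔL + √(2 * s : ℕ) * maxNorm G * frobNorm ΔS) := by
    linarith [mul_le_mul_of_nonneg_left hsep hκ.le]
  refine (sq_add_sq_le_of_mul_le hκ key).trans_eq ?_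
  rw [mul_pow, mul_pow, Real.sq_sqrt (Nat.cast_nonneg _), Real.sq_sqrt (Nat.cast_nonneg _)]
  push_cast
  ring
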